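/- Let p : X → P be a topological submersion of relative dimension d, meaning every point x ∈ X admits an open neighborhood of the form U × N with U a d-dimensional topological manifold and N open in P, via a homeomorphism over P onto a neighborhood of x. Then the quadruple (X, X ×_P X, Δ, π₂), where Δ : X → X ×_P X is the diagonal and π₂ the second projection, is a d-dimensional topological microbundle over X (the vertical tangent microbundle). -/

import Mathlib

universe u

/-- `p : X → P` is a topological submersion of relative dimension `d`: every point of `X` has
a neighborhood of the form `U × N`, with `U` a `d`-dimensional topological manifold and `N`
open in `P`, via a homeomorphism over `P` onto a neighborhood of the point. -/
def IsTopSubmersion {X P : Type u} [TopologicalSpace X] [TopologicalSpace P]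
    (p : X → P) (d : ℕ) : Prop :=
  Continuous p ∧
    ∀ x : X, ∃ (U : Type u) (_ : TopologicalSpace U)
      (_ : ChartedSpace (EuclideanSpace ℝ (Fin d)) U) (N : Set P),
      IsOpen N ∧ p x ∈ N ∧
      ∃ (W : Set X) (f : (U × ↥N) ≃ₜ ↥W), IsOpen W ∧ x ∈ W ∧
        ∀ z : U × ↥N, p ((f z : X)) = (z.2 : P)

/-- `(B, E, i, p)` is a `d`-dimensional topological microbundle. -/
def IsMicrobundle (d : ℕ) {B E : Type u} [TopologicalSpace B] [TopologicalSpace E]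
    (i : B → E) (p : E → B) : Prop :=
  Continuous i ∧ Continuous p ∧ (∀ b, p (i b) = b) ∧
    ∀ b : B, ∃ (U : Set B) (V : Set E), IsOpen U ∧ b ∈ U ∧ IsOpen V ∧ i b ∈ V ∧
      ∃ φ : ((Fin d → ℝ) × ↥U) ≃ₜ ↥V,
        (∀ u : U, (φ (0, u) : E) = i (u : B)) ∧
        ∀ z : (Fin d → ℝ) × ↥U, p ((φ z : E)) = (z.2 : B)
/-!
Near any point, the submersion chart combined with a chart of the fibre restricted to a ball gives
an open embedding `F : ℝ^d × N → X` over `N ⊆ P`. Two points of the image of `F` lie over the same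
point of `P` exactly when they have the same `N`-coordinate, so over the image the fibre product is
parametrised by the shear `(v, (a, n)) ↦ (F (v + a, n), F (a, n))`, which is an embedding because
subtraction provides a continuous left inverse.
-/

open Set Topology

theorem ChartedSpace.exists_isOpenEmbedding_model_mem_range {H M : Type*} [NormedAddCommGroup H]
    [NormedSpace ℝ H] [TopologicalSpace M] [ChartedSpace H M] (x : M) :
    ∃ g : H → M, IsOpenEmbedding g ∧ x ∈ range g := by
  let c := chartAt H x
  obtain ⟨ε, hε, hball⟩ :=
    Metric.isOpen_iff.1 c.open_target (c x) (c.map_source (mem_chart_source H x))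
  let e := (OpenPartialHomeomorph.univBall (c x) ε).trans c.symm
  have he : e.source = univ := by
    refine eq_univ_of_forall fun v => ⟨by simp, hball ?_⟩
    rw [← OpenPartialHomeomorph.univBall_target (c x) hε]
    exact (OpenPartialHomeomorph.univBall (c x) ε).map_source (by simp)
  refine ⟨e, e.isOpenEmbedding he, 0, ?_⟩
  simp [e, c, c.left_inv (mem_chart_source H x)]

theorem IsTopSubmersion.exists_isOpenEmbedding_prod {X P : Type u} [TopologicalSpace X]
    [TopologicalSpace P] {p : X → P} {d : ℕ} (hp : IsTopSubmersion p d) (x : X) :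
    ∃ (N : Set P) (F : (Fin d → ℝ) × N → X),
      IsOpenEmbedding F ∧ x ∈ range F ∧ ∀ z, p (F z) = z.2 := by
  obtain ⟨U, _, _, N, -, -, W, f, hW, hxW, hpf⟩ := hp.2 x
  obtain ⟨g, hg, v, hv⟩ :=
    ChartedSpace.exists_isOpenEmbedding_model_mem_range (H := EuclideanSpace ℝ (Fin d))
      (f.symm ⟨x, hxW⟩).1
  let e := (EuclideanSpace.equiv (Fin d) ℝ).symm.toHomeomorph
  refine ⟨N, Subtype.val ∘ f ∘ Prod.map (g ∘ e) id,
    hW.isOpenEmbedding_subtypeVal.comp <| f.isOpenEmbedding.comp <|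
      (hg.comp e.isOpenEmbedding).prodMap .id,
    ⟨(e.symm v, (f.symm ⟨x, hxW⟩).2), ?_⟩, fun z => hpf _⟩
  simp [hv]

section VerticalShear

variable {X P E : Type*} [AddCommGroup E] {p : X → P} {N : Set P} {F : E × N → X}

def verticalShear (hpF : ∀ z, p (F z) = z.2) (z : E × (E × N)) :
    {q : X × X // p q.1 = p q.2} :=
  ⟨(F (z.1 + z.2.1, z.2.2), F z.2), by rw [hpF, hpF]⟩

theorem range_verticalShear (hpF : ∀ z, p (F z) = z.2) :
    range (verticalShear hpF) = Subtype.val ⁻¹' (range F ×ˢ range F) := by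
  refine Subset.antisymm ?_ ?_
  · rintro _ ⟨z, rfl⟩
    exact ⟨mem_range_self _, mem_range_self _⟩
  · rintro ⟨⟨_, _⟩, hq⟩ ⟨⟨a, rfl : F a = _⟩, ⟨b, rfl : F b = _⟩⟩
    have hab : a.2 = b.2 := Subtype.ext (by simpa [hpF] using hq)
    exact ⟨(a.1 - b.1, b), by simp [verticalShear, ← hab]⟩

variable [TopologicalSpace X] [TopologicalSpace P] [TopologicalSpace E] [IsTopologicalAddGroup E]

theorem isEmbedding_verticalShear (hF : IsEmbedding F) (hpF : ∀ z, p (F z) = z.2) :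
    IsEmbedding (verticalShear hpF) := by
  have hshear : IsEmbedding fun z : E × (E × N) => ((z.1 + z.2.1, z.2.2), z.2) :=
    Function.LeftInverse.isEmbedding (f := fun w : (E × N) × (E × N) => (w.1.1 - w.2.1, w.2))
      (fun z => by simp) (by fun_prop) (by fun_prop)
  refine .of_comp (by unfold verticalShear; fun_prop) continuous_subtype_val ?_
  exact (hF.prodMap hF).comp hshear

theorem exists_microbundle_chart_of_isOpenEmbedding (hF : IsOpenEmbedding F)
    (hpF : ∀ z, p (F z) = z.2) {x : X} (hx : x ∈ range F) :
    ∃ (U : Set X) (V : Set {q : X × X // p q.1 = p q.2}), IsOpen U ∧ x ∈ U ∧ IsOpen V ∧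
      ⟨(x, x), rfl⟩ ∈ V ∧ ∃ φ : (E × ↥U) ≃ₜ ↥V,
        (∀ u : U, (φ (0, u) : {q : X × X // p q.1 = p q.2}) = ⟨(u, u), rfl⟩) ∧
        ∀ z : E × ↥U, (φ z).1.1.2 = z.2 := by
  let e := hF.isEmbedding.toHomeomorph
  let φ :=
    ((Homeomorph.refl E).prodCongr e).symm.trans
      ((isEmbedding_verticalShear hF.isEmbedding hpF).toHomeomorph.trans
        (.setCongr (range_verticalShear hpF)))
  refine ⟨range F, _, hF.isOpen_range, hx,
    (hF.isOpen_range.prod hF.isOpen_range).preimage continuous_subtype_val, ⟨hx, hx⟩, φ,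
    ?_, ?_⟩
  · intro u
    obtain ⟨z, rfl⟩ := e.surjective u
    change verticalShear hpF (0, e.symm (e z)) = _
    simp [verticalShear, e]
  · exact fun z => congrArg Subtype.val (e.apply_symm_apply z.2)

end VerticalShear

/-- If `p : X → P` is a topological submersion of relative dimension `d`, then
`(X, X ×_P X, Δ, π₂)` is a `d`-dimensional topological microbundle over `X`
(the vertical tangent microbundle). -/
theorem verticalTangentMicrobundle {X P : Type u} [TopologicalSpace X] [TopologicalSpace P]
    (p : X → P) (d : ℕ) (hp : IsTopSubmersion p d) :
    IsMicrobundle d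
      (fun x : X => (⟨(x, x), rfl⟩ : {q : X × X // p q.1 = p q.2}))
      (fun q : {q : X × X // p q.1 = p q.2} => q.1.2) := by
  refine ⟨by fun_prop, by fun_prop, fun _ => rfl, fun x => ?_⟩
  obtain ⟨N, F, hF, hx, hpF⟩ := hp.exists_isOpenEmbedding_prod x
  exact exists_microbundle_chart_of_isOpenEmbedding hF hpF hx
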